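/- For any Dyck path x ∈ D_{2k}^0 with zero flaws, f^k(x) is the mirror image of x at the line y=0, i.e., f^k(x) is obtained from x by exchanging every U-step with a D-step and vice versa. -/

import Mathlib

/-- Value of a step: `true` = U-step (+1), `false` = D-step (-1). -/
def stepVal (b : Bool) : ℤ := if b then 1 else -1

/-- Height of the lattice path `x` after its first `i` steps. -/
def pathHeight (x : List Bool) (i : ℕ) : ℤ := ((x.take i).map stepVal).sum

/-- The step at position `i` (0-indexed) is a U-step. -/
def isU (x : List Bool) (i : ℕ) : Bool := x.getD i true

/-- The step at position `i` (0-indexed) is a D-step. -/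
def isD (x : List Bool) (i : ℕ) : Bool := !(x.getD i true)

/-- Number of flaws: D-steps lying below the line y=0 (i.e. starting at height ≤ 0). -/
def flaws (x : List Bool) : ℕ :=
  ((List.range x.length).filter (fun i => isD x i && decide (pathHeight x i ≤ 0))).length

/-- `DyckSet k e` = the set `D_{2k}^e` of Dyck paths with `2k` steps and `e` flaws. -/
def DyckSet (k e : ℕ) : Set (List Bool) :=
  {x | x.length = 2*k ∧ x.count true = k ∧ flaws x = e}

/-- `LSet k m` = the set `L_{2k,m}` of lattice paths with `2k` steps and `m` U-steps. -/
def LSet (k m : ℕ) : Set (List Bool) :=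
  {x | x.length = 2*k ∧ x.count true = m}

/-- `d_c(x)`: number of D-steps of `x` starting on the line `y = c`. -/
def dstart (x : List Bool) (c : ℤ) : ℕ :=
  ((List.range x.length).filter (fun i => isD x i && decide (pathHeight x i = c))).length

/-- `u_c(x)`: number of U-steps of `x` starting on the line `y = c`. -/
def ustart (x : List Bool) (c : ℤ) : ℕ :=
  ((List.range x.length).filter (fun i => isU x i && decide (pathHeight x i = c))).length

/-- Positions (in increasing order) of D-steps of `x` touching the line `y = c`
(a D-step at position `i` goes from height `pathHeight x i` down to `pathHeight x i - 1`,
so it touches `y = c` iff its start height is `c` or `c+1`). -/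
def dtouch (x : List Bool) (c : ℤ) : List ℕ :=
  (List.range x.length).filter
    (fun i => isD x i && (decide (pathHeight x i = c) || decide (pathHeight x i = c+1)))

/-- Positions (in increasing order) of U-steps of `x` touching the line `y = c`
(a U-step at position `i` goes from height `pathHeight x i` up to `pathHeight x i + 1`,
so it touches `y = c` iff its start height is `c` or `c-1`). -/
def utouch (x : List Bool) (c : ℤ) : List ℕ :=
  (List.range x.length).filter
    (fun i => isU x i && (decide (pathHeight x i = c) || decide (pathHeight x i = c-1)))

/-- Position (0-indexed) flipped by `g`: the `(d_0(x)+1)`-th D-step touching `y=0`. -/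
def gIdx (x : List Bool) : ℕ := (dtouch x 0).getD (dstart x 0) 0

/-- The map `g`: flip the `(d_0(x)+1)`-th D-step of `x` touching the line `y=0`. -/
def gMap (x : List Bool) : List Bool := x.set (gIdx x) true

/-- Position (0-indexed) flipped by `h`: the `u_1(x)`-th U-step touching `y=1`. -/
def hIdx (x : List Bool) : ℕ := (utouch x 1).getD (ustart x 1 - 1) 0

/-- The map `h`: flip the `u_1(x)`-th U-step of `x` touching the line `y=1`. -/
def hMap (x : List Bool) : List Bool := x.set (hIdx x) false

/-- Position (0-indexed) flipped by `g'`: the `d_0(x)`-th D-step touching `y=0`. -/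
def g'Idx (x : List Bool) : ℕ := (dtouch x 0).getD (dstart x 0 - 1) 0

/-- The map `g'`: flip the `d_0(x)`-th D-step of `x` touching the line `y=0`. -/
def g'Map (x : List Bool) : List Bool := x.set (g'Idx x) true

/-- Position (0-indexed) flipped by `h'`: the `(u_1(x)+1)`-th U-step touching `y=1`. -/
def h'Idx (x : List Bool) : ℕ := (utouch x 1).getD (ustart x 1) 0

/-- The map `h'`: flip the `(u_1(x)+1)`-th U-step of `x` touching the line `y=1`. -/
def h'Map (x : List Bool) : List Bool := x.set (h'Idx x) false

/-- The minimum-change map `f := h ∘ g`. -/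
def fMap (x : List Bool) : List Bool := hMap (gMap x)

/-- `piSeq n x`: the sequence of (1-indexed) positions flipped by the successive
applications `g, h, g, h, ...` over `n` applications of `f` starting from `x`. -/
def piSeq : ℕ → List Bool → List ℕ
  | 0, _ => []
  | n+1, x => (gIdx x + 1) :: (hIdx (gMap x) + 1) :: piSeq n (fMap x)

/-- Reverse the step sequence and complement every step. -/
def revComp (x : List Bool) : List Bool := x.reverse.map (fun b => !b)

/-!
Write a Dyck path by its first-return decomposition `U a D b`, recursively, and let `x'` denote
the mirror image of `x`. The `f`-orbit of `U a D b` is then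
`f^e (U a D b) = U (g (f^(|a| - e) a))' U b` for `0 < e ≤ |a|`, running backwards through the
orbit of `a`, and `f^e (U a D b) = D a' U f^(e - |a| - 1) b` for `e > |a|`; at `e = k` this is
`D a' U b'`. The recursion is checked by locating the steps flipped by `g` and `h` on these
paths: inside a mirrored piece they are the steps flipped by `h'` and `g'`, which undo `g` and
`h` along an orbit, so the four maps are handled by one induction on the decomposition tree.
-/

lemma List.length_filter_or_of_disjoint {α : Type*} {p q : α → Bool} (l : List α)
    (h : ∀ a, ¬(p a ∧ q a)) :
    (l.filter fun a => p a || q a).length = (l.filter p).length + (l.filter q).length := by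
  induction l with
  | nil => rfl
  | cons a l ih =>
    have := h a
    cases hp : p a <;> cases hq : q a <;> simp_all <;> omega

lemma List.getD_map_add_of_lt {l : List ℕ} {n : ℕ} (a : ℕ) (h : n < l.length) :
    (l.map (a + ·)).getD n 0 = a + l.getD n 0 := by
  rw [List.getD_eq_getElem _ _ (by simpa using h), List.getD_eq_getElem _ _ h, List.getElem_map]

namespace DyckFlip

def endHeight (x : List Bool) : ℤ := (x.map stepVal).sum

lemma pathHeight_eq_endHeight_take (x : List Bool) (i : ℕ) :
    pathHeight x i = endHeight (x.take i) := rfl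

@[simp] lemma endHeight_nil : endHeight [] = 0 := rfl

@[simp] lemma endHeight_cons (b : Bool) (x : List Bool) :
    endHeight (b :: x) = stepVal b + endHeight x := by
  simp [endHeight]

@[simp] lemma endHeight_append (x y : List Bool) :
    endHeight (x ++ y) = endHeight x + endHeight y := by
  simp [endHeight]

@[simp] lemma endHeight_map_not (x : List Bool) : endHeight (x.map (!·)) = -endHeight x := by
  induction x with
  | nil => rfl
  | cons b x ih => cases b <;> simp [ih, stepVal, add_comm]

lemma endHeight_eq_count (x : List Bool) :
    endHeight x = 2 * (x.count true : ℤ) - x.length := by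
  induction x with
  | nil => rfl
  | cons b x ih => cases b <;> simp [ih, stepVal] <;> ring

lemma pathHeight_of_length_le {x : List Bool} {i : ℕ} (h : x.length ≤ i) :
    pathHeight x i = endHeight x := by
  rw [pathHeight_eq_endHeight_take, List.take_of_length_le h]

@[simp] lemma pathHeight_zero (x : List Bool) : pathHeight x 0 = 0 := rfl

lemma pathHeight_cons_succ (b : Bool) (x : List Bool) (i : ℕ) :
    pathHeight (b :: x) (i + 1) = stepVal b + pathHeight x i := by
  simp [pathHeight_eq_endHeight_take]

lemma pathHeight_succ {x : List Bool} {i : ℕ} (h : i < x.length) :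
    pathHeight x (i + 1) = pathHeight x i + stepVal (x.getD i true) := by
  rw [pathHeight_eq_endHeight_take, pathHeight_eq_endHeight_take, List.take_add_one,
    List.getElem?_eq_getElem h, List.getD_eq_getElem _ _ h, Option.toList_some,
    endHeight_append]
  simp [endHeight]

lemma pathHeight_append_of_le_length (x y : List Bool) {i : ℕ} (h : i ≤ x.length) :
    pathHeight (x ++ y) i = pathHeight x i := by
  simp [pathHeight_eq_endHeight_take, List.take_append_of_le_length h]

lemma pathHeight_append_of_length_le (x y : List Bool) {i : ℕ} (h : x.length ≤ i) :
    pathHeight (x ++ y) i = endHeight x + pathHeight y (i - x.length) := by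
  obtain ⟨j, rfl⟩ := Nat.exists_eq_add_of_le h
  simp [pathHeight_eq_endHeight_take, List.take_append, List.take_of_length_le]

lemma pathHeight_map_not (x : List Bool) (i : ℕ) :
    pathHeight (x.map (!·)) i = -pathHeight x i := by
  rw [pathHeight_eq_endHeight_take, ← List.map_take, endHeight_map_not]; rfl

lemma pathHeight_take (x : List Bool) (n i : ℕ) :
    pathHeight (x.take n) i = pathHeight x (min i n) := by
  rw [pathHeight_eq_endHeight_take, pathHeight_eq_endHeight_take, List.take_take]

lemma pathHeight_drop (x : List Bool) (n i : ℕ) :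
    pathHeight (x.drop n) i = pathHeight x (n + i) - pathHeight x n := by
  rcases le_or_gt n x.length with hn | hn
  · have h := pathHeight_append_of_length_le (x.take n) (x.drop n) (i := n + i)
    rw [List.take_append_drop, List.length_take_of_le hn] at h
    rw [h (by omega), pathHeight_eq_endHeight_take x n]
    simp
  · simp [List.drop_of_length_le hn.le, pathHeight_eq_endHeight_take,
      List.take_of_length_le (show x.length ≤ n + i by omega), List.take_of_length_le hn.le]

def positions (p : Bool → ℤ → Bool) (x : List Bool) : List ℕ :=
  (List.range x.length).filter fun i => p (x.getD i true) (pathHeight x i)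

lemma positions_append (p : Bool → ℤ → Bool) (x y : List Bool) :
    positions p (x ++ y) = positions p x ++
      (positions (fun b h => p b (endHeight x + h)) y).map (x.length + ·) := by
  unfold positions
  rw [List.length_append, List.range_add, List.filter_append, List.filter_map]
  congr 1
  · refine List.filter_congr fun i hi => ?_
    rw [List.mem_range] at hi
    rw [List.getD_append _ _ _ _ hi, pathHeight_append_of_le_length _ _ hi.le]
  · refine congrArg _ (List.filter_congr fun i _ => ?_)
    simp only [Function.comp_apply]
    rw [List.getD_append_right _ _ _ _ (by omega), pathHeight_append_of_length_le _ _ (by omega),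
      Nat.add_sub_cancel_left]

lemma positions_map_not (p : Bool → ℤ → Bool) (x : List Bool) :
    positions p (x.map (!·)) = positions (fun b h => p (!b) (-h)) x := by
  unfold positions
  rw [List.length_map]
  refine List.filter_congr fun i hi => ?_
  rw [List.mem_range] at hi
  rw [pathHeight_map_not, List.getD_eq_getElem _ _ (by simpa using hi),
    List.getD_eq_getElem _ _ hi, List.getElem_map]

lemma dtouch_eq_positions (x : List Bool) (c : ℤ) :
    dtouch x c = positions (fun b h => !b && (decide (h = c) || decide (h = c + 1))) x := rfl

lemma utouch_eq_positions (x : List Bool) (c : ℤ) :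
    utouch x c = positions (fun b h => b && (decide (h = c) || decide (h = c - 1))) x := rfl

lemma dstart_eq_positions (x : List Bool) (c : ℤ) :
    dstart x c = (positions (fun b h => !b && decide (h = c)) x).length := rfl

lemma ustart_eq_positions (x : List Bool) (c : ℤ) :
    ustart x c = (positions (fun b h => b && decide (h = c)) x).length := rfl

lemma dtouch_append (x y : List Bool) (c : ℤ) :
    dtouch (x ++ y) c = dtouch x c ++ (dtouch y (c - endHeight x)).map (x.length + ·) := by
  simp only [dtouch_eq_positions, positions_append]
  congr 3; funext b h; congr 1; grind

lemma utouch_append (x y : List Bool) (c : ℤ) :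
    utouch (x ++ y) c = utouch x c ++ (utouch y (c - endHeight x)).map (x.length + ·) := by
  simp only [utouch_eq_positions, positions_append]
  congr 3; funext b h; congr 1; grind

lemma dstart_append (x y : List Bool) (c : ℤ) :
    dstart (x ++ y) c = dstart x c + dstart y (c - endHeight x) := by
  simp only [dstart_eq_positions, positions_append, List.length_append, List.length_map]
  congr 4; funext b h; congr 1; grind

lemma ustart_append (x y : List Bool) (c : ℤ) :
    ustart (x ++ y) c = ustart x c + ustart y (c - endHeight x) := by
  simp only [ustart_eq_positions, positions_append, List.length_append, List.length_map]
  congr 4; funext b h; congr 1; grind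

lemma dtouch_map_not (x : List Bool) (c : ℤ) : dtouch (x.map (!·)) c = utouch x (-c) := by
  simp only [dtouch_eq_positions, utouch_eq_positions, positions_map_not, Bool.not_not]
  congr 1; funext b h; congr 1; grind

lemma utouch_map_not (x : List Bool) (c : ℤ) : utouch (x.map (!·)) c = dtouch x (-c) := by
  simp only [dtouch_eq_positions, utouch_eq_positions, positions_map_not]
  congr 1; funext b h; congr 1; grind

lemma dstart_map_not (x : List Bool) (c : ℤ) : dstart (x.map (!·)) c = ustart x (-c) := by
  simp only [dstart_eq_positions, ustart_eq_positions, positions_map_not, Bool.not_not]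
  congr 2; funext b h; congr 1; grind

lemma ustart_map_not (x : List Bool) (c : ℤ) : ustart (x.map (!·)) c = dstart x (-c) := by
  simp only [dstart_eq_positions, ustart_eq_positions, positions_map_not]
  congr 2; funext b h; congr 1; grind

lemma dtouch_cons_true (x : List Bool) (c : ℤ) :
    dtouch (true :: x) c = (dtouch x (c - 1)).map (1 + ·) := by
  rw [← List.singleton_append, dtouch_append]
  simp [dtouch, isD, stepVal]

lemma dtouch_cons_false (x : List Bool) (c : ℤ) :
    dtouch (false :: x) c =
      (if c = 0 ∨ c = -1 then [0] else []) ++ (dtouch x (c + 1)).map (1 + ·) := by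
  rw [← List.singleton_append, dtouch_append]
  simp [dtouch, isD, stepVal, List.filter_singleton, eq_comm (a := (0 : ℤ)),
    eq_neg_iff_add_eq_zero]

lemma utouch_cons_true (x : List Bool) (c : ℤ) :
    utouch (true :: x) c =
      (if c = 0 ∨ c = 1 then [0] else []) ++ (utouch x (c - 1)).map (1 + ·) := by
  rw [← List.singleton_append, utouch_append]
  simp [utouch, isU, stepVal, List.filter_singleton, eq_comm (a := (0 : ℤ)), sub_eq_zero]

lemma utouch_cons_false (x : List Bool) (c : ℤ) :
    utouch (false :: x) c = (utouch x (c + 1)).map (1 + ·) := by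
  rw [← List.singleton_append, utouch_append]
  simp [utouch, isU, stepVal]

lemma dstart_cons_true (x : List Bool) (c : ℤ) : dstart (true :: x) c = dstart x (c - 1) := by
  rw [← List.singleton_append, dstart_append]
  simp [dstart, isD, stepVal]

lemma dstart_cons_false (x : List Bool) (c : ℤ) :
    dstart (false :: x) c = (if c = 0 then 1 else 0) + dstart x (c + 1) := by
  rw [← List.singleton_append, dstart_append]
  simp [dstart, isD, stepVal, List.filter_singleton, eq_comm (a := (0 : ℤ)), Bool.cond_eq_ite,
    apply_ite List.length]

lemma ustart_cons_true (x : List Bool) (c : ℤ) :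
    ustart (true :: x) c = (if c = 0 then 1 else 0) + ustart x (c - 1) := by
  rw [← List.singleton_append, ustart_append]
  simp [ustart, isU, stepVal, List.filter_singleton, eq_comm (a := (0 : ℤ)), Bool.cond_eq_ite,
    apply_ite List.length]

lemma ustart_cons_false (x : List Bool) (c : ℤ) : ustart (false :: x) c = ustart x (c + 1) := by
  rw [← List.singleton_append, ustart_append]
  simp [ustart, isU, stepVal]

lemma length_dtouch (x : List Bool) (c : ℤ) :
    (dtouch x c).length = dstart x c + dstart x (c + 1) := by
  simp only [dtouch, dstart, Bool.and_or_distrib_left]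
  exact List.length_filter_or_of_disjoint _ fun _ => by simp; omega

lemma length_utouch (x : List Bool) (c : ℤ) :
    (utouch x c).length = ustart x c + ustart x (c - 1) := by
  simp only [utouch, ustart, Bool.and_or_distrib_left]
  exact List.length_filter_or_of_disjoint _ fun _ => by simp; omega

lemma getD_dtouch_lt_length {x : List Bool} {c : ℤ} {n : ℕ} (h : n < (dtouch x c).length) :
    (dtouch x c).getD n 0 < x.length := by
  rw [List.getD_eq_getElem _ _ h]
  simpa using (List.mem_filter.mp (List.getElem_mem h)).1

lemma getD_utouch_lt_length {x : List Bool} {c : ℤ} {n : ℕ} (h : n < (utouch x c).length) :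
    (utouch x c).getD n 0 < x.length := by
  rw [List.getD_eq_getElem _ _ h]
  simpa using (List.mem_filter.mp (List.getElem_mem h)).1

def Nonneg (x : List Bool) : Prop := ∀ i, 0 ≤ pathHeight x i

lemma Nonneg.one_le_of_getD_eq_false {x : List Bool} (hx : Nonneg x) {i : ℕ} (hi : i < x.length)
    (hd : x.getD i true = false) : 1 ≤ pathHeight x i := by
  have := hx (i + 1)
  rw [pathHeight_succ hi, hd] at this
  simp only [stepVal, Bool.false_eq_true, if_false] at this
  omega

lemma Nonneg.dtouch_eq_nil {x : List Bool} (hx : Nonneg x) {c : ℤ} (hc : c ≤ -1) :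
    dtouch x c = [] := by
  refine List.filter_eq_nil_iff.mpr fun i hi => ?_
  rw [List.mem_range] at hi
  simp only [isD, Bool.and_eq_true, Bool.not_eq_true', Bool.or_eq_true, decide_eq_true_eq, not_and]
  intro hd
  have := hx.one_le_of_getD_eq_false hi hd
  omega

lemma Nonneg.utouch_eq_nil {x : List Bool} (hx : Nonneg x) {c : ℤ} (hc : c ≤ -1) :
    utouch x c = [] := by
  refine List.filter_eq_nil_iff.mpr fun i _ => ?_
  have := hx i
  simp only [Bool.and_eq_true, Bool.or_eq_true, decide_eq_true_eq, not_and]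
  omega

lemma Nonneg.dstart_eq_zero {x : List Bool} (hx : Nonneg x) {c : ℤ} (hc : c ≤ 0) :
    dstart x c = 0 := by
  refine List.length_eq_zero_iff.mpr (List.filter_eq_nil_iff.mpr fun i hi => ?_)
  rw [List.mem_range] at hi
  simp only [isD, Bool.and_eq_true, Bool.not_eq_true', decide_eq_true_eq, not_and]
  intro hd
  have := hx.one_le_of_getD_eq_false hi hd
  omega

lemma Nonneg.ustart_eq_zero {x : List Bool} (hx : Nonneg x) {c : ℤ} (hc : c ≤ -1) :
    ustart x c = 0 := by
  refine List.length_eq_zero_iff.mpr (List.filter_eq_nil_iff.mpr fun i _ => ?_)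
  have := hx i
  simp only [Bool.and_eq_true, decide_eq_true_eq, not_and]
  omega

/- The paths on an `f`-orbit of a Dyck path have one of three shapes, with `A`, `B` Dyck paths:
`U A D B`, `U W' U B` and `D A' U Z`, where `'` mirrors a path. In the second, `W'` lies between
the lines `y = 0` and `y = 2`, so its D-steps touching `y = 0` are the mirrors of the U-steps
of `W` touching `y = 1`; unless they flip one of the two outer U-steps, `g`, `h`, `g'`, `h'`
then act on `W` as `h'`, `g'`, `h`, `g`. -/
section Shapes

variable {A B V W Z : List Bool}

lemma dtouch_root (hA : Nonneg A) (hA0 : endHeight A = 0) :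
    dtouch (true :: (A ++ false :: B)) 0 =
      (1 + A.length) :: (dtouch B 0).map (2 + A.length + ·) := by
  rw [dtouch_cons_true, dtouch_append, hA0, hA.dtouch_eq_nil (by norm_num), dtouch_cons_false]
  simp +arith [Function.comp_def]

lemma dstart_root (hA : Nonneg A) (hA0 : endHeight A = 0) (hB : Nonneg B) :
    dstart (true :: (A ++ false :: B)) 0 = 0 := by
  rw [dstart_cons_true, dstart_append, hA0, hA.dstart_eq_zero (by norm_num), dstart_cons_false,
    hB.dstart_eq_zero (by norm_num)]
  simp

lemma dtouch_inner (hW : endHeight W = 2) :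
    dtouch (true :: (W.map (!·) ++ true :: B)) 0 =
      (utouch W 1).map (1 + ·) ++ (dtouch B 0).map (2 + W.length + ·) := by
  rw [dtouch_cons_true, dtouch_append, endHeight_map_not, hW, dtouch_map_not, dtouch_cons_true]
  simp +arith [Function.comp_def]

lemma dstart_inner (hW : endHeight W = 2) (hB : Nonneg B) :
    dstart (true :: (W.map (!·) ++ true :: B)) 0 = ustart W 1 := by
  rw [dstart_cons_true, dstart_append, endHeight_map_not, hW, dstart_map_not, dstart_cons_true,
    hB.dstart_eq_zero (by norm_num)]
  simp

lemma utouch_inner (hV : endHeight V = 0) (hB : Nonneg B) :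
    utouch (true :: (V.map (!·) ++ true :: B)) 1 =
      0 :: ((dtouch V 0).map (1 + ·) ++ [1 + V.length]) := by
  rw [utouch_cons_true, utouch_append, endHeight_map_not, hV, utouch_map_not, utouch_cons_true,
    hB.utouch_eq_nil (by norm_num)]
  simp

lemma ustart_inner (hV : endHeight V = 0) (hB : Nonneg B) :
    ustart (true :: (V.map (!·) ++ true :: B)) 1 = dstart V 0 + 1 := by
  rw [ustart_cons_true, ustart_append, endHeight_map_not, hV, ustart_map_not, ustart_cons_true,
    hB.ustart_eq_zero (by norm_num)]
  simp

lemma dtouch_tail (hA : Nonneg A) (hA0 : endHeight A = 0) :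
    dtouch (false :: (A.map (!·) ++ true :: Z)) 0 = 0 :: (dtouch Z 0).map (2 + A.length + ·) := by
  rw [dtouch_cons_false, dtouch_append, endHeight_map_not, hA0, dtouch_map_not,
    hA.utouch_eq_nil (by norm_num), dtouch_cons_true]
  simp +arith [Function.comp_def]

lemma dstart_tail (hA : Nonneg A) (hA0 : endHeight A = 0) :
    dstart (false :: (A.map (!·) ++ true :: Z)) 0 = dstart Z 0 + 1 := by
  rw [dstart_cons_false, dstart_append, endHeight_map_not, hA0, dstart_map_not,
    hA.ustart_eq_zero (by norm_num), dstart_cons_true]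
  simp [add_comm]

lemma utouch_tail (hA : Nonneg A) (hA0 : endHeight A = 0) :
    utouch (false :: (A.map (!·) ++ true :: Z)) 1 = (utouch Z 1).map (2 + A.length + ·) := by
  rw [utouch_cons_false, utouch_append, endHeight_map_not, hA0, utouch_map_not,
    hA.dtouch_eq_nil (by norm_num), utouch_cons_true]
  simp +arith [Function.comp_def]

lemma ustart_tail (hA : Nonneg A) (hA0 : endHeight A = 0) {c : ℤ} (hc : 0 ≤ c) :
    ustart (false :: (A.map (!·) ++ true :: Z)) c = ustart Z c := by
  rw [ustart_cons_false, ustart_append, endHeight_map_not, hA0, ustart_map_not,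
    hA.dstart_eq_zero (by omega), ustart_cons_true, if_neg (by omega)]
  simp

lemma set_inner {p : ℕ} (hp : p < W.length) (v : Bool) :
    (true :: (W.map (!·) ++ true :: B)).set (1 + p) v =
      true :: ((W.set p !v).map (!·) ++ true :: B) := by
  rw [Nat.add_comm, List.set_cons_succ, List.set_append_left _ _ (by simpa using hp), List.map_set,
    Bool.not_not]

lemma set_tail (p : ℕ) (v : Bool) :
    (false :: (A.map (!·) ++ true :: Z)).set (2 + A.length + p) v =
      false :: (A.map (!·) ++ true :: Z.set p v) := by
  rw [show 2 + A.length + p = (A.map (!·)).length + (p + 1) + 1 by simp; omega, List.set_cons_succ,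
    List.set_append_right _ _ (by omega), Nat.add_sub_cancel_left, List.set_cons_succ]

lemma gMap_root (hA : Nonneg A) (hA0 : endHeight A = 0) (hB : Nonneg B) :
    gMap (true :: (A ++ false :: B)) = true :: (A ++ true :: B) := by
  have hidx : gIdx (true :: (A ++ false :: B)) = 1 + A.length := by
    rw [gIdx, dtouch_root hA hA0, dstart_root hA hA0 hB]; rfl
  rw [gMap, hidx, Nat.add_comm, List.set_cons_succ, List.set_append_right _ _ le_rfl, Nat.sub_self]
  rfl

lemma gMap_inner (hW : endHeight W = 2) (hB : Nonneg B) (h : 1 ≤ ustart W 0) :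
    gMap (true :: (W.map (!·) ++ true :: B)) = true :: ((h'Map W).map (!·) ++ true :: B) := by
  have hlt : ustart W 1 < (utouch W 1).length := by rw [length_utouch, sub_self]; omega
  have hidx : gIdx (true :: (W.map (!·) ++ true :: B)) = 1 + h'Idx W := by
    rw [gIdx, dtouch_inner hW, dstart_inner hW hB, List.getD_append _ _ _ _ (by simpa using hlt),
      List.getD_map_add_of_lt _ hlt]; rfl
  rw [gMap, hidx, set_inner (p := h'Idx W) (getD_utouch_lt_length hlt)]; rfl

lemma gMap_tail (hA : Nonneg A) (hA0 : endHeight A = 0) (h : dstart Z 0 < (dtouch Z 0).length) :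
    gMap (false :: (A.map (!·) ++ true :: Z)) = false :: (A.map (!·) ++ true :: gMap Z) := by
  have hidx : gIdx (false :: (A.map (!·) ++ true :: Z)) = 2 + A.length + gIdx Z := by
    rw [gIdx, dtouch_tail hA hA0, dstart_tail hA hA0, List.getD_cons_succ,
      List.getD_map_add_of_lt _ h]; rfl
  rw [gMap, hidx, set_tail]; rfl

lemma hMap_inner_of_dstart_eq_zero (hV : endHeight V = 0) (hB : Nonneg B) (h : dstart V 0 = 0) :
    hMap (true :: (V.map (!·) ++ true :: B)) = false :: (V.map (!·) ++ true :: B) := by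
  have hidx : hIdx (true :: (V.map (!·) ++ true :: B)) = 0 := by
    rw [hIdx, utouch_inner hV hB, ustart_inner hV hB, h]; rfl
  rw [hMap, hidx]; rfl

lemma hMap_inner (hV : endHeight V = 0) (hB : Nonneg B) (h : 1 ≤ dstart V 0) :
    hMap (true :: (V.map (!·) ++ true :: B)) = true :: ((g'Map V).map (!·) ++ true :: B) := by
  have hlt : dstart V 0 - 1 < (dtouch V 0).length := by rw [length_dtouch]; omega
  have hidx : hIdx (true :: (V.map (!·) ++ true :: B)) = 1 + g'Idx V := by
    rw [hIdx, utouch_inner hV hB, ustart_inner hV hB, Nat.add_sub_cancel,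
      show dstart V 0 = dstart V 0 - 1 + 1 by omega, List.getD_cons_succ,
      List.getD_append _ _ _ _ (by simpa using hlt), List.getD_map_add_of_lt _ hlt]; rfl
  rw [hMap, hidx, set_inner (p := g'Idx V) (getD_dtouch_lt_length hlt)]; rfl

lemma hMap_tail (hA : Nonneg A) (hA0 : endHeight A = 0) (h : 1 ≤ ustart Z 1) :
    hMap (false :: (A.map (!·) ++ true :: Z)) = false :: (A.map (!·) ++ true :: hMap Z) := by
  have hlt : ustart Z 1 - 1 < (utouch Z 1).length := by rw [length_utouch]; omega
  have hidx : hIdx (false :: (A.map (!·) ++ true :: Z)) = 2 + A.length + hIdx Z := by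
    rw [hIdx, utouch_tail hA hA0, ustart_tail hA hA0 zero_le_one,
      List.getD_map_add_of_lt _ hlt]; rfl
  rw [hMap, hidx, set_tail]; rfl

lemma h'Map_inner_of_dstart_one_eq_zero (hV : endHeight V = 0) (hB : Nonneg B)
    (h : dstart V 1 = 0) :
    h'Map (true :: (V.map (!·) ++ true :: B)) = true :: (V.map (!·) ++ false :: B) := by
  have hlen : (dtouch V 0).length = dstart V 0 := by rw [length_dtouch, zero_add, h, add_zero]
  have hidx : h'Idx (true :: (V.map (!·) ++ true :: B)) = 1 + (V.map (!·)).length := by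
    rw [h'Idx, utouch_inner hV hB, ustart_inner hV hB, List.getD_cons_succ,
      List.getD_append_right _ _ _ _ (by simp [hlen])]
    simp [hlen]
  rw [h'Map, hidx, Nat.add_comm, List.set_cons_succ, List.set_append_right _ _ le_rfl, Nat.sub_self]
  rfl

lemma h'Map_inner (hV : endHeight V = 0) (hB : Nonneg B) (h : dstart V 0 < (dtouch V 0).length) :
    h'Map (true :: (V.map (!·) ++ true :: B)) = true :: ((gMap V).map (!·) ++ true :: B) := by
  have hidx : h'Idx (true :: (V.map (!·) ++ true :: B)) = 1 + gIdx V := by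
    rw [h'Idx, utouch_inner hV hB, ustart_inner hV hB, List.getD_cons_succ,
      List.getD_append _ _ _ _ (by simpa using h), List.getD_map_add_of_lt _ h]; rfl
  rw [h'Map, hidx, set_inner (p := gIdx V) (getD_dtouch_lt_length h)]; rfl

lemma h'Map_tail (hA : Nonneg A) (hA0 : endHeight A = 0) (h : 1 ≤ ustart Z 0) :
    h'Map (false :: (A.map (!·) ++ true :: Z)) = false :: (A.map (!·) ++ true :: h'Map Z) := by
  have hlt : ustart Z 1 < (utouch Z 1).length := by rw [length_utouch, sub_self]; omega
  have hidx : h'Idx (false :: (A.map (!·) ++ true :: Z)) = 2 + A.length + h'Idx Z := by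
    rw [h'Idx, utouch_tail hA hA0, ustart_tail hA hA0 zero_le_one,
      List.getD_map_add_of_lt _ hlt]; rfl
  rw [h'Map, hidx, set_tail]; rfl

lemma g'Map_inner (hW : endHeight W = 2) (hB : Nonneg B) (h : 1 ≤ ustart W 1) :
    g'Map (true :: (W.map (!·) ++ true :: B)) = true :: ((hMap W).map (!·) ++ true :: B) := by
  have hlt : ustart W 1 - 1 < (utouch W 1).length := by rw [length_utouch]; omega
  have hidx : g'Idx (true :: (W.map (!·) ++ true :: B)) = 1 + hIdx W := by
    rw [g'Idx, dtouch_inner hW, dstart_inner hW hB, List.getD_append _ _ _ _ (by simpa using hlt),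
      List.getD_map_add_of_lt _ hlt]; rfl
  rw [g'Map, hidx, set_inner (p := hIdx W) (getD_utouch_lt_length hlt)]; rfl

lemma g'Map_tail_of_dstart_eq_zero (hA : Nonneg A) (hA0 : endHeight A = 0) (h : dstart Z 0 = 0) :
    g'Map (false :: (A.map (!·) ++ true :: Z)) = true :: (A.map (!·) ++ true :: Z) := by
  have hidx : g'Idx (false :: (A.map (!·) ++ true :: Z)) = 0 := by
    rw [g'Idx, dtouch_tail hA hA0, dstart_tail hA hA0, h]; rfl
  rw [g'Map, hidx]; rfl

lemma g'Map_tail (hA : Nonneg A) (hA0 : endHeight A = 0) (h : 1 ≤ dstart Z 0) :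
    g'Map (false :: (A.map (!·) ++ true :: Z)) = false :: (A.map (!·) ++ true :: g'Map Z) := by
  have hlt : dstart Z 0 - 1 < (dtouch Z 0).length := by rw [length_dtouch]; omega
  have hidx : g'Idx (false :: (A.map (!·) ++ true :: Z)) = 2 + A.length + g'Idx Z := by
    rw [g'Idx, dtouch_tail hA hA0, dstart_tail hA hA0, Nat.add_sub_cancel,
      show dstart Z 0 = dstart Z 0 - 1 + 1 by omega, List.getD_cons_succ,
      List.getD_map_add_of_lt _ hlt]; rfl
  rw [g'Map, hidx, set_tail]; rfl

end Shapes

inductive DyckTree where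
  | leaf : DyckTree
  | node : DyckTree → DyckTree → DyckTree

namespace DyckTree

def toPath : DyckTree → List Bool
  | leaf => []
  | node a b => true :: (a.toPath ++ false :: b.toPath)

def size : DyckTree → ℕ
  | leaf => 0
  | node a b => a.size + b.size + 1

/- `orbit d e = f^[e] d.toPath` and `gOrbit d e = g (f^[e] d.toPath)`
(`fMap_iterate_toPath`, `gMap_orbit`). -/
mutual
def orbit : DyckTree → ℕ → List Bool
  | leaf, _ => []
  | node a b, e =>
    if e = 0 then true :: (a.toPath ++ false :: b.toPath)
    else if e ≤ a.size then true :: ((gOrbit a (a.size - e)).map (!·) ++ true :: b.toPath)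
    else false :: (a.toPath.map (!·) ++ true :: orbit b (e - a.size - 1))

def gOrbit : DyckTree → ℕ → List Bool
  | leaf, _ => []
  | node a b, e =>
    if e ≤ a.size then true :: ((orbit a (a.size - e)).map (!·) ++ true :: b.toPath)
    else false :: (a.toPath.map (!·) ++ true :: gOrbit b (e - a.size - 1))
end

lemma length_toPath (d : DyckTree) : d.toPath.length = 2 * d.size := by
  induction d with
  | leaf => rfl
  | node a b iha ihb =>
    simp only [toPath, size, List.length_cons, List.length_append, iha, ihb]
    ring

lemma endHeight_toPath (d : DyckTree) : endHeight d.toPath = 0 := by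
  induction d with
  | leaf => rfl
  | node a b iha ihb => simp [toPath, iha, ihb, stepVal]

lemma nonneg_toPath (d : DyckTree) : Nonneg d.toPath := by
  induction d with
  | leaf => intro i; simp [toPath, pathHeight]
  | node a b iha ihb =>
    rintro (_ | i)
    · exact le_rfl
    rw [toPath, pathHeight_cons_succ]
    rcases le_or_gt i a.toPath.length with hi | hi
    · rw [pathHeight_append_of_le_length _ _ hi]
      have := iha i
      simp only [stepVal, if_true]
      omega
    · obtain ⟨j, rfl⟩ := Nat.exists_eq_add_of_lt hi
      rw [pathHeight_append_of_length_le _ _ hi.le, endHeight_toPath,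
        show a.toPath.length + j + 1 - a.toPath.length = j + 1 by omega, pathHeight_cons_succ]
      have := ihb j
      simp only [stepVal, if_true, Bool.false_eq_true, if_false]
      omega

lemma orbit_zero (d : DyckTree) : d.orbit 0 = d.toPath := by
  cases d <;> rfl

lemma orbit_size (d : DyckTree) : d.orbit d.size = d.toPath.map (!·) := by
  induction d with
  | leaf => rfl
  | node a b _ ihb =>
    rw [orbit, if_neg (by simp [size]), if_neg (by simp [size]),
      show (node a b).size - a.size - 1 = b.size by simp [size]; omega, ihb]
    simp [toPath]

variable {a b : DyckTree} {e : ℕ}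

lemma orbit_node_of_le (h0 : e ≠ 0) (h : e ≤ a.size) :
    (node a b).orbit e = true :: ((a.gOrbit (a.size - e)).map (!·) ++ true :: b.toPath) := by
  rw [orbit, if_neg h0, if_pos h]

lemma orbit_node_of_lt (h : a.size < e) :
    (node a b).orbit e = false :: (a.toPath.map (!·) ++ true :: b.orbit (e - a.size - 1)) := by
  rw [orbit, if_neg (by omega), if_neg (by omega)]

lemma gOrbit_node_of_le (h : e ≤ a.size) :
    (node a b).gOrbit e = true :: ((a.orbit (a.size - e)).map (!·) ++ true :: b.toPath) := by
  rw [gOrbit, if_pos h]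

lemma gOrbit_node_of_lt (h : a.size < e) :
    (node a b).gOrbit e = false :: (a.toPath.map (!·) ++ true :: b.gOrbit (e - a.size - 1)) := by
  rw [gOrbit, if_neg (by omega)]

mutual
theorem endHeight_orbit : ∀ (d : DyckTree) {e : ℕ}, e ≤ d.size → endHeight (d.orbit e) = 0
  | leaf, _, _ => rfl
  | node a b, e, h => by
    simp only [size] at h
    rcases Nat.eq_zero_or_pos e with rfl | he
    · rw [orbit_zero, endHeight_toPath]
    rcases le_or_gt e a.size with hle | hlt
    · rw [orbit_node_of_le he.ne' hle]
      simp [endHeight_gOrbit a (show a.size - e < a.size by omega), endHeight_toPath, stepVal]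
    · rw [orbit_node_of_lt hlt]
      simp [endHeight_orbit b (show e - a.size - 1 ≤ b.size by omega), endHeight_toPath, stepVal]

theorem endHeight_gOrbit : ∀ (d : DyckTree) {e : ℕ}, e < d.size → endHeight (d.gOrbit e) = 2
  | leaf, _, h => absurd h (Nat.not_lt_zero _)
  | node a b, e, h => by
    simp only [size] at h
    rcases le_or_gt e a.size with hle | hlt
    · rw [gOrbit_node_of_le hle]
      simp [endHeight_orbit a (show a.size - e ≤ a.size by omega), endHeight_toPath, stepVal]
    · rw [gOrbit_node_of_lt hlt]
      simp [endHeight_gOrbit b (show e - a.size - 1 < b.size by omega), endHeight_toPath, stepVal]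
end

theorem one_le_ustart_gOrbit_one :
    ∀ (d : DyckTree) {e : ℕ}, e < d.size → 1 ≤ ustart (d.gOrbit e) 1
  | leaf, _, h => absurd h (Nat.not_lt_zero _)
  | node a b, e, h => by
    simp only [size] at h
    rcases le_or_gt e a.size with hle | hlt
    · rw [gOrbit_node_of_le hle, ustart_inner (endHeight_orbit a (by omega)) (nonneg_toPath b)]
      omega
    · rw [gOrbit_node_of_lt hlt, ustart_tail (nonneg_toPath a) (endHeight_toPath a) zero_le_one]
      exact one_le_ustart_gOrbit_one b (by omega)

theorem one_le_ustart_gOrbit_zero :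
    ∀ (d : DyckTree) {e : ℕ}, e < d.size → 1 ≤ ustart (d.gOrbit e) 0
  | leaf, _, h => absurd h (Nat.not_lt_zero _)
  | node a b, e, h => by
    simp only [size] at h
    rcases le_or_gt e a.size with hle | hlt
    · rw [gOrbit_node_of_le hle, ustart_cons_true, if_pos rfl]
      omega
    · rw [gOrbit_node_of_lt hlt, ustart_tail (nonneg_toPath a) (endHeight_toPath a) le_rfl]
      exact one_le_ustart_gOrbit_zero b (by omega)

theorem dstart_lt_length_dtouch_orbit :
    ∀ (d : DyckTree) {e : ℕ}, e < d.size →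
      dstart (d.orbit e) 0 < (dtouch (d.orbit e) 0).length
  | leaf, _, h => absurd h (Nat.not_lt_zero _)
  | node a b, e, h => by
    simp only [size] at h
    have hA := nonneg_toPath a
    have hA0 := endHeight_toPath a
    rcases Nat.eq_zero_or_pos e with rfl | he
    · rw [orbit_zero, toPath, dtouch_root hA hA0, dstart_root hA hA0 (nonneg_toPath b)]
      simp
    rcases le_or_gt e a.size with hle | hlt
    · have hW := endHeight_gOrbit a (show a.size - e < a.size by omega)
      have := one_le_ustart_gOrbit_zero a (show a.size - e < a.size by omega)
      rw [orbit_node_of_le he.ne' hle, dtouch_inner hW, dstart_inner hW (nonneg_toPath b),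
        List.length_append, List.length_map, length_utouch, sub_self]
      omega
    · have := dstart_lt_length_dtouch_orbit b (show e - a.size - 1 < b.size by omega)
      rw [orbit_node_of_lt hlt, dtouch_tail hA hA0, dstart_tail hA hA0]
      simpa using this

lemma one_le_dstart_orbit_succ {d : DyckTree} (h : e < d.size) :
    1 ≤ dstart (d.orbit (e + 1)) 0 := by
  cases d with
  | leaf => exact absurd h (Nat.not_lt_zero _)
  | node a b =>
    rcases le_or_gt (e + 1) a.size with hle | hlt
    · have hW := endHeight_gOrbit a (show a.size - (e + 1) < a.size by omega)
      rw [orbit_node_of_le (by omega) hle, dstart_inner hW (nonneg_toPath b)]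
      exact one_le_ustart_gOrbit_one a (by omega)
    · rw [orbit_node_of_lt hlt, dstart_tail (nonneg_toPath a) (endHeight_toPath a)]
      omega

mutual
theorem gMap_orbit : ∀ (d : DyckTree) {e : ℕ}, e < d.size → gMap (d.orbit e) = d.gOrbit e
  | leaf, _, h => absurd h (Nat.not_lt_zero _)
  | node a b, e, h => by
    simp only [size] at h
    have hA := nonneg_toPath a
    have hA0 := endHeight_toPath a
    rcases Nat.eq_zero_or_pos e with rfl | he
    · rw [orbit_zero, toPath, gMap_root hA hA0 (nonneg_toPath b),
        gOrbit_node_of_le (Nat.zero_le _), Nat.sub_zero, orbit_size]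
      simp [Function.comp_def]
    rcases le_or_gt e a.size with hle | hlt
    · have hlt' : a.size - e < a.size := by omega
      rw [orbit_node_of_le he.ne' hle, gMap_inner (endHeight_gOrbit a hlt') (nonneg_toPath b)
        (one_le_ustart_gOrbit_zero a hlt'), h'Map_gOrbit a hlt', gOrbit_node_of_le hle]
    · have hlt' : e - a.size - 1 < b.size := by omega
      rw [orbit_node_of_lt hlt, gMap_tail hA hA0 (dstart_lt_length_dtouch_orbit b hlt'),
        gMap_orbit b hlt', gOrbit_node_of_lt hlt]

theorem h'Map_gOrbit : ∀ (d : DyckTree) {e : ℕ}, e < d.size → h'Map (d.gOrbit e) = d.orbit e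
  | leaf, _, h => absurd h (Nat.not_lt_zero _)
  | node a b, e, h => by
    simp only [size] at h
    have hA := nonneg_toPath a
    have hB := nonneg_toPath b
    rcases le_or_gt e a.size with hle | hlt
    · have hV := endHeight_orbit a (show a.size - e ≤ a.size by omega)
      rw [gOrbit_node_of_le hle]
      rcases Nat.eq_zero_or_pos e with rfl | he
      · have hd : dstart (a.orbit (a.size - 0)) 1 = 0 := by
          rw [Nat.sub_zero, orbit_size, dstart_map_not, hA.ustart_eq_zero (by norm_num)]
        rw [h'Map_inner_of_dstart_one_eq_zero hV hB hd, Nat.sub_zero, orbit_size, orbit_zero,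
          toPath]
        simp [Function.comp_def]
      · have hlt' : a.size - e < a.size := by omega
        rw [h'Map_inner hV hB (dstart_lt_length_dtouch_orbit a hlt'), gMap_orbit a hlt',
          orbit_node_of_le he.ne' hle]
    · have hlt' : e - a.size - 1 < b.size := by omega
      rw [gOrbit_node_of_lt hlt, h'Map_tail hA (endHeight_toPath a)
        (one_le_ustart_gOrbit_zero b hlt'), h'Map_gOrbit b hlt', orbit_node_of_lt hlt]
end

mutual
theorem hMap_gOrbit :
    ∀ (d : DyckTree) {e : ℕ}, e < d.size → hMap (d.gOrbit e) = d.orbit (e + 1)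
  | leaf, _, h => absurd h (Nat.not_lt_zero _)
  | node a b, e, h => by
    simp only [size] at h
    have hA := nonneg_toPath a
    have hB := nonneg_toPath b
    rcases le_or_gt e a.size with hle | hlt
    · rw [gOrbit_node_of_le hle]
      rcases eq_or_lt_of_le hle with rfl | hlt
      · rw [Nat.sub_self, orbit_zero,
          hMap_inner_of_dstart_eq_zero (endHeight_toPath a) hB (hA.dstart_eq_zero le_rfl),
          orbit_node_of_lt (Nat.lt_succ_self _), show a.size + 1 - a.size - 1 = 0 by omega,
          orbit_zero]
      · have hlt' : a.size - e - 1 < a.size := by omega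
        have hsucc : a.size - e = a.size - e - 1 + 1 := by omega
        rw [hMap_inner (endHeight_orbit a (by omega)) hB (hsucc ▸ one_le_dstart_orbit_succ hlt'),
          hsucc, g'Map_orbit_succ a hlt', orbit_node_of_le (by omega) (by omega),
          show a.size - (e + 1) = a.size - e - 1 by omega]
    · have hlt' : e - a.size - 1 < b.size := by omega
      rw [gOrbit_node_of_lt hlt, hMap_tail hA (endHeight_toPath a)
        (one_le_ustart_gOrbit_one b hlt'), hMap_gOrbit b hlt', orbit_node_of_lt (by omega),
        show e + 1 - a.size - 1 = e - a.size - 1 + 1 by omega]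

theorem g'Map_orbit_succ : ∀ (d : DyckTree) {e : ℕ}, e < d.size →
    g'Map (d.orbit (e + 1)) = d.gOrbit e
  | leaf, _, h => absurd h (Nat.not_lt_zero _)
  | node a b, e, h => by
    simp only [size] at h
    have hA := nonneg_toPath a
    have hA0 := endHeight_toPath a
    have hB := nonneg_toPath b
    rcases lt_or_ge e a.size with hlt | hge
    · have hlt' : a.size - (e + 1) < a.size := by omega
      rw [orbit_node_of_le (by omega) hlt, g'Map_inner (endHeight_gOrbit a hlt') hB
        (one_le_ustart_gOrbit_one a hlt'), hMap_gOrbit a hlt', gOrbit_node_of_le hlt.le,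
        show a.size - (e + 1) + 1 = a.size - e by omega]
    rw [orbit_node_of_lt (by omega)]
    rcases eq_or_lt_of_le hge with heq | hlt
    · rw [← heq, show a.size + 1 - a.size - 1 = 0 by omega, orbit_zero,
        g'Map_tail_of_dstart_eq_zero hA hA0 (hB.dstart_eq_zero le_rfl), gOrbit_node_of_le le_rfl,
        Nat.sub_self, orbit_zero]
    · have hlt' : e - a.size - 1 < b.size := by omega
      have hsucc : e + 1 - a.size - 1 = e - a.size - 1 + 1 := by omega
      rw [hsucc, g'Map_tail hA hA0 (one_le_dstart_orbit_succ hlt'), g'Map_orbit_succ b hlt',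
        gOrbit_node_of_lt hlt]
end

end DyckTree

lemma DyckTree.fMap_iterate_toPath (d : DyckTree) {e : ℕ} (h : e ≤ d.size) :
    fMap^[e] d.toPath = d.orbit e := by
  induction e with
  | zero => exact (orbit_zero d).symm
  | succ e ih =>
    rw [Function.iterate_succ_apply', ih (by omega), fMap, gMap_orbit d h, hMap_gOrbit d h]

lemma nonneg_of_flaws_eq_zero {x : List Bool} (h : flaws x = 0) : Nonneg x := by
  have hD : ∀ i < x.length, x.getD i true = false → 0 < pathHeight x i := by
    intro i hi hd
    by_contra hle
    rw [List.getD_eq_getElem _ _ hi] at hd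
    have hmem : i ∈ (List.range x.length).filter
        fun i => isD x i && decide (pathHeight x i ≤ 0) := by
      simp [hi, isD, hd, not_lt.mp hle]
    rw [List.length_eq_zero_iff.mp h] at hmem
    exact List.not_mem_nil hmem
  intro i
  induction i with
  | zero => exact le_rfl
  | succ i ih =>
    rcases lt_or_ge i x.length with hi | hi
    · rw [pathHeight_succ hi]
      cases hd : x.getD i true
      · have := hD i hi hd
        simp only [stepVal, Bool.false_eq_true, if_false]
        omega
      · simp only [stepVal, if_true]
        omega
    · rwa [pathHeight_of_length_le (by omega), ← pathHeight_of_length_le hi]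

lemma exists_eq_append_false_cons {r : List Bool} (hr : Nonneg (true :: r))
    (h : endHeight r = -1) :
    ∃ A B, r = A ++ false :: B ∧ Nonneg A ∧ endHeight A = 0 ∧ Nonneg B ∧
      endHeight B = 0 := by
  have hge : ∀ i, -1 ≤ pathHeight r i := fun i => by
    have := hr (i + 1)
    rw [pathHeight_cons_succ] at this
    simp only [stepVal, if_true] at this
    omega
  have hex : ∃ p, pathHeight r (p + 1) = -1 := by
    refine ⟨r.length - 1, ?_⟩
    cases r with
    | nil => simp at h
    | cons c r => rwa [List.length_cons, Nat.add_sub_cancel, pathHeight_of_length_le (by simp)]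
  set p := Nat.find hex
  have hp : pathHeight r (p + 1) = -1 := Nat.find_spec hex
  have hbefore : ∀ j ≤ p, 0 ≤ pathHeight r j := by
    rintro (_ | j) hj
    · exact le_rfl
    · have := Nat.find_min hex (show j < p by omega)
      have := hge (j + 1)
      omega
  have hplt : p < r.length := by
    by_contra hle
    rw [pathHeight_of_length_le (Nat.le_succ_of_le (not_lt.mp hle)),
      ← pathHeight_of_length_le (not_lt.mp hle)] at hp
    have := hbefore p le_rfl
    omega
  have hstep := pathHeight_succ hplt
  have hp0 := hbefore p le_rfl
  obtain ⟨hrp, hpath0⟩ : r[p] = false ∧ pathHeight r p = 0 := by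
    rw [List.getD_eq_getElem _ _ hplt, hp] at hstep
    cases hc : r[p] <;> simp only [hc, stepVal, Bool.false_eq_true, if_true, if_false] at hstep
    · exact ⟨rfl, by omega⟩
    · omega
  refine ⟨r.take p, r.drop (p + 1), ?_, fun i => ?_, hpath0, fun i => ?_, ?_⟩
  · rw [← hrp, ← List.drop_eq_getElem_cons hplt, List.take_append_drop]
  · rw [pathHeight_take]
    exact hbefore _ (min_le_right _ _)
  · rw [pathHeight_drop, hp]
    have := hge (p + 1 + i)
    omega
  · have := congrArg endHeight (List.take_append_drop (p + 1) r)
    rw [endHeight_append, ← pathHeight_eq_endHeight_take, hp, h] at this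
    omega

lemma exists_toPath_eq :
    ∀ (x : List Bool), Nonneg x → endHeight x = 0 → ∃ d : DyckTree, d.toPath = x
  | [], _, _ => ⟨.leaf, rfl⟩
  | false :: r, hx, _ => by
    have := hx 1
    simp [stepVal, pathHeight] at this
  | true :: r, hx, h0 => by
    obtain ⟨A, B, hr, hA, hA0, hB, hB0⟩ :=
      exists_eq_append_false_cons hx (by simp [stepVal] at h0; omega)
    obtain ⟨a, rfl⟩ := exists_toPath_eq A hA hA0
    obtain ⟨b, rfl⟩ := exists_toPath_eq B hB hB0
    exact ⟨.node a b, by rw [hr]; rfl⟩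
termination_by x => x.length
decreasing_by all_goals subst hr; simp only [List.length_cons, List.length_append]; omega

end DyckFlip

theorem fk_is_mirror (k : ℕ) (x : List Bool) (hx : x ∈ DyckSet k 0) :
    fMap^[k] x = x.map (fun b => !b) := by
  obtain ⟨hlen, hcount, hflaws⟩ := hx
  obtain ⟨d, rfl⟩ := DyckFlip.exists_toPath_eq x (DyckFlip.nonneg_of_flaws_eq_zero hflaws)
    (by rw [DyckFlip.endHeight_eq_count, hcount, hlen]; push_cast; ring)
  have hsize : d.size = k := by
    have := d.length_toPath
    omega
  rw [← hsize, d.fMap_iterate_toPath le_rfl, d.orbit_size]
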